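/- Let φ, ψ : ℝ → ℝ be smooth functions and define y(u,v) = φ(u+v) + ψ(u−v) and p(u,v) = −φ(u+v) + ψ(u−v) on ℝ². Then there exists a smooth function z : ℝ² → ℝ with z_u = p + v·y_u and z_v = v·y_v on ℝ², and for any such z the map f(u,v) = (u, y(u,v), z(u,v), p(u,v), v) satisfies the contact condition and the Hess = −1 condition on all of ℝ². -/

import Mathlib

noncomputable section

/-- Partial derivative in the direction `(1,0)`. -/
def pu (g : ℝ × ℝ → ℝ) (a : ℝ × ℝ) : ℝ := fderiv ℝ g a (1, 0)

/-- Partial derivative in the direction `(0,1)`. -/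
def pv (g : ℝ × ℝ → ℝ) (a : ℝ × ℝ) : ℝ := fderiv ℝ g a (0, 1)

/-- Jacobian determinant `g_u h_v - g_v h_u`. -/
def Jac (g h : ℝ × ℝ → ℝ) (a : ℝ × ℝ) : ℝ := pu g a * pv h a - pv g a * pu h a

/-- The first coordinate function `x(u,v) = u`. -/
def Xc : ℝ × ℝ → ℝ := fun a => a.1

/-- The last coordinate function `q(u,v) = v`. -/
def Qc : ℝ × ℝ → ℝ := fun a => a.2

/-- linear map `(u,v) ↦ u + v`. -/
def Lp : ℝ × ℝ →L[ℝ] ℝ := ContinuousLinearMap.fst ℝ ℝ ℝ + ContinuousLinearMap.snd ℝ ℝ ℝ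

/-- linear map `(u,v) ↦ u - v`. -/
def Lm : ℝ × ℝ →L[ℝ] ℝ := ContinuousLinearMap.fst ℝ ℝ ℝ - ContinuousLinearMap.snd ℝ ℝ ℝ

lemma hLp (a : ℝ × ℝ) : HasFDerivAt (fun a : ℝ × ℝ => a.1 + a.2) Lp a := Lp.hasFDerivAt

lemma hLm (a : ℝ × ℝ) : HasFDerivAt (fun a : ℝ × ℝ => a.1 - a.2) Lm a := Lm.hasFDerivAt

lemma comp_p (h : ℝ → ℝ) (hh : ContDiff ℝ (⊤ : ℕ∞) h) (a : ℝ × ℝ) :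
    HasFDerivAt (fun a : ℝ × ℝ => h (a.1 + a.2)) (deriv h (a.1 + a.2) • Lp) a :=
  ((hh.differentiable (by simp) (a.1 + a.2)).hasDerivAt).comp_hasFDerivAt a (hLp a)

lemma comp_m (h : ℝ → ℝ) (hh : ContDiff ℝ (⊤ : ℕ∞) h) (a : ℝ × ℝ) :
    HasFDerivAt (fun a : ℝ × ℝ => h (a.1 - a.2)) (deriv h (a.1 - a.2) • Lm) a :=
  ((hh.differentiable (by simp) (a.1 - a.2)).hasDerivAt).comp_hasFDerivAt a (hLm a)

lemma key (h k : ℝ → ℝ) (hh : ContDiff ℝ (⊤ : ℕ∞) h) (hk : ContDiff ℝ (⊤ : ℕ∞) k)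
    (w : ℝ × ℝ → ℝ) (hw : ∀ a : ℝ × ℝ, w a = h (a.1 + a.2) + k (a.1 - a.2)) (a : ℝ × ℝ) :
    pu w a = deriv h (a.1 + a.2) + deriv k (a.1 - a.2) ∧
    pv w a = deriv h (a.1 + a.2) - deriv k (a.1 - a.2) := by
  have hwf : w = fun a : ℝ × ℝ => h (a.1 + a.2) + k (a.1 - a.2) := funext hw
  have H : HasFDerivAt w (deriv h (a.1 + a.2) • Lp + deriv k (a.1 - a.2) • Lm) a := by
    rw [hwf]; exact (comp_p h hh a).add (comp_m k hk a)
  constructor <;>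
  · simp only [pu, pv, H.fderiv, ContinuousLinearMap.add_apply, ContinuousLinearMap.smul_apply,
      Lp, Lm, ContinuousLinearMap.sub_apply, ContinuousLinearMap.coe_fst', ContinuousLinearMap.coe_snd', smul_eq_mul]
    ring

/-- From smooth `φ, ψ`, d'Alembert's formula produces geometric solutions to Hess = -1. -/
theorem stmt6 (φ ψ : ℝ → ℝ)
    (hφ : ContDiff ℝ (⊤ : ℕ∞) φ) (hψ : ContDiff ℝ (⊤ : ℕ∞) ψ)
    (y p : ℝ × ℝ → ℝ)
    (hydef : ∀ a : ℝ × ℝ, y a = φ (a.1 + a.2) + ψ (a.1 - a.2))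
    (hpdef : ∀ a : ℝ × ℝ, p a = - φ (a.1 + a.2) + ψ (a.1 - a.2)) :
    (∃ z : ℝ × ℝ → ℝ, ContDiff ℝ (⊤ : ℕ∞) z ∧
      ∀ a : ℝ × ℝ, pu z a = p a + a.2 * pu y a ∧ pv z a = a.2 * pv y a) ∧
    ∀ z : ℝ × ℝ → ℝ,
      (∀ a : ℝ × ℝ, pu z a = p a + a.2 * pu y a ∧ pv z a = a.2 * pv y a) →
      (∀ a : ℝ × ℝ,
        (pu z a = p a * pu Xc a + Qc a * pu y a ∧
         pv z a = p a * pv Xc a + Qc a * pv y a) ∧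
        Jac Xc y a + Jac p Qc a = 0) := by
  -- derivatives of y and p
  have hy := key φ ψ hφ hψ y hydef
  have hφn : ContDiff ℝ (⊤ : ℕ∞) (fun x => - φ x) := hφ.neg
  have hp := key (fun x => - φ x) ψ hφn hψ p hpdef
  have hderivneg : ∀ x : ℝ, deriv (fun x => - φ x) x = - deriv φ x := fun x => deriv.neg
  -- antiderivatives
  set Φ : ℝ → ℝ := fun x => ∫ t in (0:ℝ)..x, φ t with hΦdef
  set Ψ : ℝ → ℝ := fun x => ∫ t in (0:ℝ)..x, ψ t with hΨdef
  have hΦ' : ∀ x, HasDerivAt Φ (φ x) x := fun x =>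
    (hφ.continuous.integral_hasStrictDerivAt 0 x).hasDerivAt
  have hΨ' : ∀ x, HasDerivAt Ψ (ψ x) x := fun x =>
    (hψ.continuous.integral_hasStrictDerivAt 0 x).hasDerivAt
  have hΦd : deriv Φ = φ := funext fun x => (hΦ' x).deriv
  have hΨd : deriv Ψ = ψ := funext fun x => (hΨ' x).deriv
  have hΦc : ContDiff ℝ (⊤ : ℕ∞) Φ := by
    exact contDiff_infty_iff_deriv.2 ⟨fun x => (hΦ' x).differentiableAt, hΦd ▸ hφ⟩
  have hΨc : ContDiff ℝ (⊤ : ℕ∞) Ψ := by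
    exact contDiff_infty_iff_deriv.2 ⟨fun x => (hΨ' x).differentiableAt, hΨd ▸ hψ⟩
  constructor
  · -- existence of z
    refine ⟨fun a => - Φ (a.1 + a.2) + Ψ (a.1 - a.2) + a.2 * (φ (a.1 + a.2) + ψ (a.1 - a.2)),
      ?_, ?_⟩
    · have h1 : ContDiff ℝ (⊤ : ℕ∞) (fun a : ℝ × ℝ => a.1 + a.2) :=
        contDiff_fst.add contDiff_snd
      have h2 : ContDiff ℝ (⊤ : ℕ∞) (fun a : ℝ × ℝ => a.1 - a.2) :=
        contDiff_fst.sub contDiff_snd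
      exact ((hΦc.comp h1).neg.add (hΨc.comp h2)).add
        (contDiff_snd.mul ((hφ.comp h1).add (hψ.comp h2)))
    · intro a
      set s := a.1 + a.2
      set t := a.1 - a.2
      have hz : HasFDerivAt (fun a : ℝ × ℝ => - Φ (a.1 + a.2) + Ψ (a.1 - a.2)
            + a.2 * (φ (a.1 + a.2) + ψ (a.1 - a.2)))
          ((-(φ s • Lp) + ψ t • Lm)
            + (a.2 • (deriv φ s • Lp + deriv ψ t • Lm)
              + (φ s + ψ t) • ContinuousLinearMap.snd ℝ ℝ ℝ)) a := by
        have hA : HasFDerivAt (fun a : ℝ × ℝ => Φ (a.1 + a.2)) (φ s • Lp) a := by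
          have := comp_p Φ hΦc a; rwa [hΦd] at this
        have hB : HasFDerivAt (fun a : ℝ × ℝ => Ψ (a.1 - a.2)) (ψ t • Lm) a := by
          have := comp_m Ψ hΨc a; rwa [hΨd] at this
        have hC : HasFDerivAt (fun a : ℝ × ℝ => φ (a.1 + a.2) + ψ (a.1 - a.2))
            (deriv φ s • Lp + deriv ψ t • Lm) a := (comp_p φ hφ a).add (comp_m ψ hψ a)
        have hsnd : HasFDerivAt (fun a : ℝ × ℝ => a.2) (ContinuousLinearMap.snd ℝ ℝ ℝ) a :=
          (ContinuousLinearMap.snd ℝ ℝ ℝ).hasFDerivAt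
        exact (hA.neg.add hB).add (hsnd.mul hC)
      constructor
      · rw [(hy a).1, hpdef a]
        simp only [pu, hz.fderiv, ContinuousLinearMap.add_apply, ContinuousLinearMap.smul_apply,
          ContinuousLinearMap.neg_apply, Lp, Lm, ContinuousLinearMap.sub_apply,
          ContinuousLinearMap.coe_fst', ContinuousLinearMap.coe_snd', smul_eq_mul]
        ring
      · rw [(hy a).2]
        simp only [pv, hz.fderiv, ContinuousLinearMap.add_apply, ContinuousLinearMap.smul_apply,
          ContinuousLinearMap.neg_apply, Lp, Lm, ContinuousLinearMap.sub_apply,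
          ContinuousLinearMap.coe_fst', ContinuousLinearMap.coe_snd', smul_eq_mul]
        ring
  · -- any such z works
    intro z hz a
    have hXc : ∀ b : ℝ × ℝ, fderiv ℝ Xc b = ContinuousLinearMap.fst ℝ ℝ ℝ := fun b =>
      (ContinuousLinearMap.fst ℝ ℝ ℝ).hasFDerivAt.fderiv
    have hQc : ∀ b : ℝ × ℝ, fderiv ℝ Qc b = ContinuousLinearMap.snd ℝ ℝ ℝ := fun b =>
      (ContinuousLinearMap.snd ℝ ℝ ℝ).hasFDerivAt.fderiv
    have hXu : pu Xc a = 1 := by simp [pu, hXc]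
    have hXv : pv Xc a = 0 := by simp [pv, hXc]
    have hQu : pu Qc a = 0 := by simp [pu, hQc]
    have hQv : pv Qc a = 1 := by simp [pv, hQc]
    refine ⟨⟨?_, ?_⟩, ?_⟩
    · rw [hXu, (hz a).1]; simp [Qc]
    · rw [hXv, (hz a).2]; simp [Qc]
    · simp only [Jac, hXu, hXv, hQu, hQv, (hy a).2, (hp a).1, hderivneg]
      ring
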